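/- arXiv:0912.2018 — 3 statements merged into one kernel-verified Lean document; each statement's English description precedes it below -/
import Mathlib

section
/- For any two invertible 2Î2 real matrices A and B, the defect of multiplicativity of the operator norm satisfies âABâ/(âAâ·âBâ) = âBâ╗┬╣Aâ╗┬╣â/(âAâ╗┬╣â·âBâ╗┬╣â), where â·â denotes the operator norm induced by the Euclidean norm on ŌäØ┬▓. -/
/-- Operator norm of a real 2×2 matrix, induced by the Euclidean norm on ℝ². -/
noncomputable def opNorm2 (M : Matrix (Fin 2) (Fin 2) ℝ) : ℝ :=
  ‖Matrix.toEuclideanCLM (𝕜 := ℝ) M‖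

set_option synthInstance.maxHeartbeats 1000000
set_option maxHeartbeats 1000000

namespace OpNormAux
open Matrix

def J : Matrix (Fin 2) (Fin 2) ℝ := !![0, -1; 1, 0]

lemma J_mem_unitary : J ∈ Matrix.unitaryGroup (Fin 2) ℝ := by
  constructor <;>
  · ext i j
    fin_cases i <;> fin_cases j <;>
      simp [J, Matrix.mul_apply, Fin.sum_univ_two, Matrix.one_apply, star, Matrix.vecHead, Matrix.vecTail]

lemma phi_J_unitary :
    Matrix.toEuclideanCLM (𝕜 := ℝ) J ∈
      unitary (EuclideanSpace ℝ (Fin 2) →L[ℝ] EuclideanSpace ℝ (Fin 2)) := by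
  constructor
  · rw [← map_star, ← _root_.map_mul, ← _root_.map_one (Matrix.toEuclideanCLM (𝕜 := ℝ))]
    exact congrArg _ J_mem_unitary.1
  · rw [← map_star, ← _root_.map_mul, ← _root_.map_one (Matrix.toEuclideanCLM (𝕜 := ℝ))]
    exact congrArg _ J_mem_unitary.2

lemma opNorm2_J_mul (M : Matrix (Fin 2) (Fin 2) ℝ) : opNorm2 (J * M) = opNorm2 M := by
  unfold opNorm2
  rw [_root_.map_mul]
  exact CStarRing.norm_mem_unitary_mul _ phi_J_unitary

lemma opNorm2_mul_J (M : Matrix (Fin 2) (Fin 2) ℝ) : opNorm2 (M * J) = opNorm2 M := by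
  unfold opNorm2
  rw [_root_.map_mul]
  exact CStarRing.norm_mul_mem_unitary _ phi_J_unitary

lemma opNorm2_transpose (M : Matrix (Fin 2) (Fin 2) ℝ) : opNorm2 Mᵀ = opNorm2 M := by
  unfold opNorm2
  have : Mᵀ = star M := rfl
  rw [this, map_star, ContinuousLinearMap.star_eq_adjoint]
  exact ContinuousLinearMap.adjoint.norm_map _

lemma adjugate_eq (M : Matrix (Fin 2) (Fin 2) ℝ) : M.adjugate = J * Mᵀ * Jᵀ := by
  ext i j
  fin_cases i <;> fin_cases j <;>
    simp [J, Matrix.mul_apply, Fin.sum_univ_two, Matrix.adjugate_fin_two, Matrix.vecMul, dotProduct, Matrix.vecHead, Matrix.vecTail]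

lemma opNorm2_neg (M : Matrix (Fin 2) (Fin 2) ℝ) : opNorm2 (-M) = opNorm2 M := by
  unfold opNorm2
  rw [map_neg, norm_neg]

lemma Jt_eq : Jᵀ = -J := by
  ext i j
  fin_cases i <;> fin_cases j <;> simp [J]

lemma opNorm2_smul (c : ℝ) (M : Matrix (Fin 2) (Fin 2) ℝ) :
    opNorm2 (c • M) = |c| * opNorm2 M := by
  unfold opNorm2
  rw [_root_.map_smul]
  rw [show |c| = ‖c‖ from rfl]
  exact norm_smul (β := EuclideanSpace ℝ (Fin 2) →L[ℝ] EuclideanSpace ℝ (Fin 2)) c (Matrix.toEuclideanCLM (𝕜 := ℝ) M)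

lemma opNorm2_inv (M : GL (Fin 2) ℝ) :
    opNorm2 ((M⁻¹ : GL (Fin 2) ℝ) : Matrix (Fin 2) (Fin 2) ℝ) =
      opNorm2 (M : Matrix (Fin 2) (Fin 2) ℝ) / |((M : Matrix (Fin 2) (Fin 2) ℝ)).det| := by
  have hdet : IsUnit ((M : Matrix (Fin 2) (Fin 2) ℝ)).det :=
    Matrix.isUnit_iff_isUnit_det _ |>.mp M.isUnit
  rw [Matrix.coe_units_inv, Matrix.inv_def, Ring.inverse_eq_inv', opNorm2_smul,
    adjugate_eq, Jt_eq, Matrix.mul_neg, opNorm2_neg, opNorm2_mul_J, opNorm2_J_mul, opNorm2_transpose, abs_inv,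
    div_eq_inv_mul]

lemma opNorm2_ne_zero (M : GL (Fin 2) ℝ) :
    opNorm2 (M : Matrix (Fin 2) (Fin 2) ℝ) ≠ 0 := by
  unfold opNorm2
  rw [norm_ne_zero_iff]
  intro h
  have : (M : Matrix (Fin 2) (Fin 2) ℝ) = 0 := by
    have := (Matrix.toEuclideanCLM (𝕜 := ℝ)).injective
      (h.trans (map_zero (Matrix.toEuclideanCLM (𝕜 := ℝ))).symm)
    exact this
  have hdet : IsUnit ((M : Matrix (Fin 2) (Fin 2) ℝ)).det :=
    Matrix.isUnit_iff_isUnit_det _ |>.mp M.isUnit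
  rw [this] at hdet
  simp at hdet

end OpNormAux

open OpNormAux in
theorem norm_defect_eq_inverse_defect (A B : GL (Fin 2) ℝ) :
    opNorm2 ((A * B : GL (Fin 2) ℝ) : Matrix (Fin 2) (Fin 2) ℝ) /
      (opNorm2 (A : Matrix (Fin 2) (Fin 2) ℝ) * opNorm2 (B : Matrix (Fin 2) (Fin 2) ℝ)) =
    opNorm2 ((B⁻¹ * A⁻¹ : GL (Fin 2) ℝ) : Matrix (Fin 2) (Fin 2) ℝ) /
      (opNorm2 ((A⁻¹ : GL (Fin 2) ℝ) : Matrix (Fin 2) (Fin 2) ℝ) *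
        opNorm2 ((B⁻¹ : GL (Fin 2) ℝ) : Matrix (Fin 2) (Fin 2) ℝ)) := by
  have hBA : (B⁻¹ * A⁻¹ : GL (Fin 2) ℝ) = (A * B)⁻¹ := (mul_inv_rev A B).symm
  rw [hBA, opNorm2_inv, opNorm2_inv, opNorm2_inv]
  have hdetAB : ((A * B : GL (Fin 2) ℝ) : Matrix (Fin 2) (Fin 2) ℝ).det =
      ((A : Matrix (Fin 2) (Fin 2) ℝ)).det * ((B : Matrix (Fin 2) (Fin 2) ℝ)).det := by
    rw [Units.val_mul, Matrix.det_mul]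
  have hA := opNorm2_ne_zero A
  have hB := opNorm2_ne_zero B
  have hdA : ((A : Matrix (Fin 2) (Fin 2) ℝ)).det ≠ 0 := by
    have := Matrix.isUnit_iff_isUnit_det _ |>.mp A.isUnit
    exact this.ne_zero
  have hdB : ((B : Matrix (Fin 2) (Fin 2) ℝ)).det ≠ 0 := by
    have := Matrix.isUnit_iff_isUnit_det _ |>.mp B.isUnit
    exact this.ne_zero
  rw [hdetAB, abs_mul]
  field_simp
  try ring
end

section
/- Let A, B Ōłł GL(2,ŌäØ) with A hyperbolic, and suppose e_A is the most contracted unit direction of A and e_{BA} that of BA (both hyperbolic). If âBAe_Aâ Ōēż âBAâ/ŌłÜ2, then tan |Ōł (e_A, e_{BA})| Ōēż ŌłÜ2 · âBAe_Aâ / âBAâ Ōēż ŌłÜ2 · âBâ·âBâ╗┬╣â / (âAâ·âAâ╗┬╣â). -/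
/-!
Since `e_{BA}` minimizes `‖BA x‖` on the unit circle, it is an eigenvector of `(BA)ᵀ(BA)`, so
in the plane its orthogonal complement is the most expanded direction and
`‖BA e_A‖² = cos²θ ‖(BA)⁻¹‖⁻² + sin²θ ‖BA‖²`. Hence `sin²θ ‖BA‖² ≤ ‖BA e_A‖² ≤ ‖BA‖² / 2`, so
`cos²θ ≥ 1/2` and `tan²θ ≤ 2 ‖BA e_A‖² / ‖BA‖²`. The second inequality combines
`‖BA e_A‖ ≤ ‖B‖ ‖A⁻¹‖⁻¹` with `‖A‖ ≤ ‖B⁻¹‖ ‖BA‖`.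
-/

local notation "E2" => EuclideanSpace ℝ (Fin 2)

open Real InnerProductGeometry
open scoped InnerProductSpace

theorem abs_tan_le_of_sin_sq_mul_sq_le {θ m S : ℝ} (hS : 0 < S) (hm : 0 ≤ m)
    (hsin : sin θ ^ 2 * S ^ 2 ≤ m ^ 2) (hsmall : m ≤ S / √2) :
    |tan θ| ≤ √2 * m / S := by
  have hm2 : 2 * m ^ 2 ≤ S ^ 2 := by
    have h := pow_le_pow_left₀ hm hsmall 2
    rw [div_pow, sq_sqrt zero_le_two, le_div_iff₀ two_pos] at h
    linarith
  have hcos : 1 ≤ 2 * cos θ ^ 2 := by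
    have : sin θ ^ 2 ≤ 1 / 2 :=
      le_of_mul_le_mul_right (by linarith : sin θ ^ 2 * S ^ 2 ≤ 1 / 2 * S ^ 2) (by positivity)
    linarith [sin_sq_add_cos_sq θ]
  refine abs_le_of_sq_le_sq ?_ (by positivity)
  rw [tan_eq_sin_div_cos, div_pow, div_pow, mul_pow, sq_sqrt zero_le_two,
    div_le_div_iff₀ (by linarith) (by positivity)]
  nlinarith [mul_le_mul_of_nonneg_left hcos (sq_nonneg m)]

namespace ContinuousLinearMap

section Normed

variable {E F : Type*} [NormedAddCommGroup E] [NormedSpace ℝ E]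
  [NormedAddCommGroup F] [NormedSpace ℝ F]

theorem one_le_opNorm_mul_opNorm_of_comp_eq_id [Nontrivial E] {M : E →L[ℝ] F} {N : F →L[ℝ] E}
    (h : N.comp M = .id ℝ E) : 1 ≤ ‖N‖ * ‖M‖ :=
  calc (1 : ℝ) = ‖N.comp M‖ := by rw [h, norm_id]
    _ ≤ ‖N‖ * ‖M‖ := opNorm_comp_le N M

theorem inv_opNorm_mul_le_norm_apply_of_comp_eq_id {M : E →L[ℝ] F} {N : F →L[ℝ] E}
    (h : N.comp M = .id ℝ E) (x : E) : ‖N‖⁻¹ * ‖x‖ ≤ ‖M x‖ := by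
  rcases (norm_nonneg N).eq_or_lt with hN | hN
  · simp [← hN]
  rw [inv_mul_le_iff₀ hN]
  calc ‖x‖ = ‖N (M x)‖ := by rw [← comp_apply, h, id_apply]
    _ ≤ ‖N‖ * ‖M x‖ := N.le_opNorm _

theorem norm_comp_apply_mul_le_of_comp_eq_id {A : E →L[ℝ] E} {B : E →L[ℝ] F}
    {B' : F →L[ℝ] E} (h : B'.comp B = .id ℝ E) {x : E} {c : ℝ} (hc : 0 ≤ c)
    (hx : c * ‖A x‖ ≤ 1) : ‖B.comp A x‖ * (‖A‖ * c) ≤ ‖B‖ * ‖B'‖ * ‖B.comp A‖ := by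
  have hA : ‖A‖ ≤ ‖B'‖ * ‖B.comp A‖ :=
    calc ‖A‖ = ‖B'.comp (B.comp A)‖ := by rw [← comp_assoc, h, id_comp]
      _ ≤ ‖B'‖ * ‖B.comp A‖ := opNorm_comp_le _ _
  calc ‖B.comp A x‖ * (‖A‖ * c) ≤ ‖B‖ * ‖A x‖ * (‖A‖ * c) := by gcongr; exact B.le_opNorm _
    _ = ‖B‖ * (c * ‖A x‖) * ‖A‖ := by ring
    _ ≤ ‖B‖ * 1 * (‖B'‖ * ‖B.comp A‖) := by gcongr
    _ = ‖B‖ * ‖B'‖ * ‖B.comp A‖ := by ring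

end Normed

section InnerProduct

variable {E : Type*} [NormedAddCommGroup E] [InnerProductSpace ℝ E] {M : E →L[ℝ] E} {σ : ℝ}

theorem inner_apply_eq_of_norm_apply_eq_lowerBound (hσ : 0 ≤ σ)
    (hlow : ∀ x, σ * ‖x‖ ≤ ‖M x‖) {e : E} (he : ‖M e‖ = σ * ‖e‖) (y : E) :
    ⟪M e, M y⟫_ℝ = σ ^ 2 * ⟪e, y⟫_ℝ := by
  have hq : ∀ x, 0 ≤ ‖M x‖ ^ 2 - σ ^ 2 * ‖x‖ ^ 2 := fun x => by
    nlinarith [pow_le_pow_left₀ (by positivity) (hlow x) 2]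
  have hquad : ∀ t : ℝ, 0 ≤ (‖M y‖ ^ 2 - σ ^ 2 * ‖y‖ ^ 2) * (t * t)
      + 2 * (⟪M e, M y⟫_ℝ - σ ^ 2 * ⟪e, y⟫_ℝ) * t + 0 := fun t => by
    have := hq (e + t • y)
    rw [map_add, map_smul, norm_add_sq_real, norm_add_sq_real, norm_smul, norm_smul,
      real_inner_smul_right, real_inner_smul_right, he, Real.norm_eq_abs] at this
    simp only [mul_pow, sq_abs] at this
    linear_combination this
  have := discrim_le_zero hquad
  rw [discrim] at this
  nlinarith [sq_nonneg (⟪M e, M y⟫_ℝ - σ ^ 2 * ⟪e, y⟫_ℝ)]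

theorem norm_apply_sq_eq_of_norm_apply_eq_lowerBound [Fact (Module.finrank ℝ E = 2)]
    (hσ : 0 ≤ σ) (hlow : ∀ x, σ * ‖x‖ ≤ ‖M x‖) {e : E} (he1 : ‖e‖ = 1) (he : ‖M e‖ = σ)
    (x : E) : ‖M x‖ ^ 2 = ⟪x, e⟫_ℝ ^ 2 * σ ^ 2 + (‖x‖ ^ 2 - ⟪x, e⟫_ℝ ^ 2) * ‖M‖ ^ 2 := by
  have : FiniteDimensional ℝ E := .of_fact_finrank_eq_two
  let o : Orientation ℝ E (Fin 2) := (Module.finBasisOfFinrankEq ℝ E Fact.out).orientation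
  set f := o.rightAngleRotation e
  have hf1 : ‖f‖ = 1 := by simp [f, he1]
  have hfe : ⟪f, e⟫_ℝ = 0 := o.inner_rightAngleRotation_self e
  have hMfe : ⟪M e, M f⟫_ℝ = 0 := by
    rw [inner_apply_eq_of_norm_apply_eq_lowerBound hσ hlow (by rw [he, he1, mul_one]),
      real_inner_comm, hfe, mul_zero]
  have hcoord : ∀ x, ∃ a b : ℝ, a • e + b • f = x := fun x =>
    ⟨_, _, by simpa [Fin.sum_univ_two] using
      (o.basisRightAngleRotation e (norm_ne_zero_iff.1 (by simp [he1]))).sum_repr x⟩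
  have hnorm : ∀ a b : ℝ, ‖a • e + b • f‖ ^ 2 = a ^ 2 + b ^ 2 := fun a b => by
    rw [norm_add_sq_real, real_inner_smul_left, real_inner_smul_right, real_inner_comm, hfe,
      norm_smul, norm_smul, he1, hf1, Real.norm_eq_abs, Real.norm_eq_abs]
    simp only [mul_pow, sq_abs]; ring
  have hMnorm : ∀ a b : ℝ, ‖M (a • e + b • f)‖ ^ 2 = a ^ 2 * σ ^ 2 + b ^ 2 * ‖M f‖ ^ 2 :=
    fun a b => by
    rw [map_add, map_smul, map_smul, norm_add_sq_real, real_inner_smul_left,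
      real_inner_smul_right, hMfe, norm_smul, norm_smul, he, Real.norm_eq_abs, Real.norm_eq_abs]
    simp only [mul_pow, sq_abs]; ring
  have hMf : ‖M f‖ = ‖M‖ := by
    refine le_antisymm (by simpa [hf1] using M.le_opNorm f)
      (opNorm_le_bound _ (norm_nonneg _) fun x => ?_)
    obtain ⟨a, b, rfl⟩ := hcoord x
    have hσf : σ ^ 2 ≤ ‖M f‖ ^ 2 :=
      pow_le_pow_left₀ hσ (by simpa [hf1] using hlow f) 2
    rw [← sq_le_sq₀ (norm_nonneg _) (by positivity), mul_pow, hMnorm, hnorm]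
    nlinarith [sq_nonneg a]
  obtain ⟨a, b, rfl⟩ := hcoord x
  have hinner : ⟪a • e + b • f, e⟫_ℝ = a := by
    rw [inner_add_left, real_inner_smul_left, real_inner_smul_left, hfe,
      real_inner_self_eq_norm_sq, he1]
    ring
  rw [hMnorm, hnorm, hinner, hMf]
  ring

end InnerProduct

end ContinuousLinearMap

open ContinuousLinearMap in
theorem angle_contracted_directions_general (A A' B B' : E2 →L[ℝ] E2)
    (hA'A : A'.comp A = ContinuousLinearMap.id ℝ E2)
    (hB'B : B'.comp B = ContinuousLinearMap.id ℝ E2)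
    (eA eBA : E2) (heA : ‖eA‖ = 1) (heBA : ‖eBA‖ = 1)
    (hceA : ‖A eA‖ = ‖A'‖⁻¹) (hceBA : ‖(B.comp A) eBA‖ = ‖A'.comp B'‖⁻¹)
    (hsmall : ‖(B.comp A) eA‖ ≤ ‖B.comp A‖ / Real.sqrt 2) :
    Real.tan (InnerProductGeometry.angle eA eBA) ≤
        Real.sqrt 2 * ‖(B.comp A) eA‖ / ‖B.comp A‖ ∧
      Real.sqrt 2 * ‖(B.comp A) eA‖ / ‖B.comp A‖ ≤
        Real.sqrt 2 * (‖B‖ * ‖B'‖) / (‖A‖ * ‖A'‖) := by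
  have hNM : (A'.comp B').comp (B.comp A) = .id ℝ E2 := by
    rw [comp_assoc, ← comp_assoc B', hB'B, id_comp, hA'A]
  have hM : 0 < ‖B.comp A‖ :=
    pos_of_mul_pos_right (one_pos.trans_le (one_le_opNorm_mul_opNorm_of_comp_eq_id hNM))
      (norm_nonneg _)
  have hcos : ⟪eA, eBA⟫_ℝ = cos (angle eA eBA) := by
    rw [cos_angle, heA, heBA, mul_one, div_one]
  have : Fact (Module.finrank ℝ E2 = 2) := ⟨finrank_euclideanSpace_fin⟩
  have hformula := norm_apply_sq_eq_of_norm_apply_eq_lowerBound (inv_nonneg.2 (norm_nonneg _))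
    (inv_opNorm_mul_le_norm_apply_of_comp_eq_id hNM) heBA hceBA eA
  rw [hcos, heA, one_pow, ← sin_sq] at hformula
  refine ⟨(le_abs_self _).trans (abs_tan_le_of_sin_sq_mul_sq_le hM (norm_nonneg _)
    (hformula ▸ le_add_of_nonneg_left (by positivity)) hsmall), ?_⟩
  have hAA' : 0 < ‖A‖ * ‖A'‖ :=
    mul_comm ‖A'‖ ‖A‖ ▸ one_pos.trans_le (one_le_opNorm_mul_opNorm_of_comp_eq_id hA'A)
  rw [div_le_div_iff₀ hM (by positivity), mul_assoc, mul_assoc]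
  exact mul_le_mul_of_nonneg_left
    (norm_comp_apply_mul_le_of_comp_eq_id hB'B (norm_nonneg _) (hceA ▸ mul_inv_le_one))
    (sqrt_nonneg 2)

/-- Comparison of the most contracted directions of `A` and `BA`. -/
theorem angle_contracted_directions (A A' B B' : E2 →L[ℝ] E2)
    (hAA' : A.comp A' = ContinuousLinearMap.id ℝ E2)
    (hA'A : A'.comp A = ContinuousLinearMap.id ℝ E2)
    (hBB' : B.comp B' = ContinuousLinearMap.id ℝ E2)
    (hB'B : B'.comp B = ContinuousLinearMap.id ℝ E2)
    (hA : 1 < ‖A‖) (hA' : 1 < ‖A'‖)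
    (hBA : 1 < ‖B.comp A‖) (hBA' : 1 < ‖A'.comp B'‖)
    (eA eBA : E2) (heA : ‖eA‖ = 1) (heBA : ‖eBA‖ = 1)
    (hceA : ‖A eA‖ = ‖A'‖⁻¹) (hceBA : ‖(B.comp A) eBA‖ = ‖A'.comp B'‖⁻¹)
    (hsmall : ‖(B.comp A) eA‖ ≤ ‖B.comp A‖ / Real.sqrt 2) :
    Real.tan (InnerProductGeometry.angle eA eBA) ≤
        Real.sqrt 2 * ‖(B.comp A) eA‖ / ‖B.comp A‖ ∧
      Real.sqrt 2 * ‖(B.comp A) eA‖ / ‖B.comp A‖ ≤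
        Real.sqrt 2 * (‖B‖ * ‖B'‖) / (‖A‖ * ‖A'‖) :=
  angle_contracted_directions_general A A' B B' hA'A hB'B eA eBA heA heBA hceA hceBA hsmall
end

section
/- Let h^{New}_T(X|╬Į,Šĩ) denote the Newhouse local entropy of an ergodic measure ╬Į at scale Šĩ for a continuous map T on a compact metric space X. Then for every positive integer k and every T-ergodic measure ╬Į, h^{New}_T(X|╬Į,Šĩ) Ōēż (1/k)·h^{New}_{T^k}(X|╬Į,Šĩ). -/
/-!
A `T`-Bowen ball of length `n` lies in the `T^[k]`-Bowen ball of length `⌈n/k⌉` around the same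
point, and by uniform continuity of `T, …, T^[k-1]` an `(n, δ)`-separated set for `T` is
`(⌈n/k⌉, δ')`-separated for `T^[k]`. Hence `h_T(δ | F, ε) ≤ h_{T^[k]}(δ' | F, ε) / k` for every `F`,
and the inequality survives the supremum over `δ` and the infimum over `F`. Because these real
suprema are `0` when unbounded, one also needs `h_{T^[k]}(δ | F, ε) ≤ k log Q + k h_T(δ | F, ε)`:
sort a `T^[k]`-separated set by the itinerary of its points through a cover of `X` by `Q` balls
of radius `ε/2`; each class is `T`-separated and lies in a single `T`-Bowen ball.
-/

open MeasureTheory Filter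

variable {X : Type*} [MetricSpace X]

/-- The Bowen ball `B(x, n, ε)`. -/
def bowenBall (T : X → X) (x : X) (n : ℕ) (ε : ℝ) : Set X :=
  {y | ∀ k < n, dist (T^[k] x) (T^[k] y) < ε}

/-- `E` is `(n,δ)`-separated for `T`. -/
def IsSeparated (T : X → X) (n : ℕ) (δ : ℝ) (E : Finset X) : Prop :=
  ∀ x ∈ E, ∀ y ∈ E, x ≠ y → ∃ k < n, δ ≤ dist (T^[k] x) (T^[k] y)

/-- `H(n,δ | x,F,ε)`: log of the maximal cardinality of an `(n,δ)`-separated subset of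
`F ∩ B(x,n,ε)`. -/
noncomputable def Hloc (T : X → X) (n : ℕ) (δ : ℝ) (x : X) (F : Set X) (ε : ℝ) : ℝ :=
  Real.log (sSup {m : ℝ | ∃ E : Finset X,
    ↑E ⊆ F ∩ bowenBall T x n ε ∧ IsSeparated T n δ E ∧ m = E.card})

/-- `H(n,δ | F,ε) = sup_{x ∈ F} H(n,δ | x,F,ε)`. -/
noncomputable def HlocF (T : X → X) (n : ℕ) (δ : ℝ) (F : Set X) (ε : ℝ) : ℝ :=
  ⨆ x : F, Hloc T n δ x F ε

/-- `h(δ | F,ε) = limsup_n H(n,δ|F,ε)/n`. -/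
noncomputable def hδF (T : X → X) (δ : ℝ) (F : Set X) (ε : ℝ) : ℝ :=
  limsup (fun n : ℕ => HlocF T n δ F ε / n) atTop

/-- `h(X | F,ε) = lim_{δ→0} h(δ|F,ε)` (a supremum over `δ > 0` by monotonicity). -/
noncomputable def hXF (T : X → X) (F : Set X) (ε : ℝ) : ℝ :=
  ⨆ δ : {δ : ℝ // 0 < δ}, hδF T δ F ε

/-- Newhouse local entropy `h^{New}(X|ν,ε) = lim_{σ→1} inf_{ν(F) > σ} h(X|F,ε)`
(a supremum over `σ < 1` by monotonicity). -/
noncomputable def hNew [MeasurableSpace X] (T : X → X) (ν : Measure X) (ε : ℝ) : ℝ :=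
  ⨆ σ : {σ : ℝ // σ < 1},
    sInf {h : ℝ | ∃ F : Set X, MeasurableSet F ∧ (σ : ℝ) < (ν F).toReal ∧ h = hXF T F ε}

open Function Set Topology

lemma Nat.lt_ceilDiv_iff_mul_lt {n k j : ℕ} (hk : 0 < k) : j < n ⌈/⌉ k ↔ k * j < n := by
  rw [← not_le, ceilDiv_le_iff_le_mul hk, not_le]

lemma Nat.tendsto_ceilDiv_atTop {k : ℕ} (hk : 0 < k) :
    Tendsto (fun n : ℕ => n ⌈/⌉ k) atTop atTop :=
  tendsto_atTop_atTop.2 fun b => ⟨k * b, fun _ hn =>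
    Nat.le_of_mul_le_mul_left (hn.trans (le_smul_ceilDiv hk)) hk⟩

lemma Nat.tendsto_ceilDiv_div_atTop {k : ℕ} (hk : 0 < k) :
    Tendsto (fun n : ℕ => ((n ⌈/⌉ k : ℕ) : ℝ) / n) atTop (𝓝 (1 / k)) := by
  have hk' : (0 : ℝ) < k := Nat.cast_pos.2 hk
  have hupper := (tendsto_const_nhds (x := (1 / k : ℝ))).add tendsto_one_div_atTop_nhds_zero_nat
  rw [add_zero] at hupper
  refine tendsto_of_tendsto_of_tendsto_of_le_of_le' tendsto_const_nhds hupper ?_ ?_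
  all_goals filter_upwards [eventually_gt_atTop 0] with n hn
  all_goals have hn' : (0 : ℝ) < n := Nat.cast_pos.2 hn
  · rw [div_le_div_iff₀ hk' hn', one_mul, mul_comm]
    exact_mod_cast le_smul_ceilDiv (b := n) hk
  · have hmul : k * (n ⌈/⌉ k) ≤ n + k - 1 := Nat.mul_div_le (n + k - 1) k
    have hmul' : (k : ℝ) * (n ⌈/⌉ k : ℕ) ≤ n + k := by exact_mod_cast (by omega : _ ≤ n + k)
    rw [div_add_div _ _ hk'.ne' hn'.ne', div_le_div_iff₀ hn' (by positivity)]
    nlinarith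

lemma limsup_div_le_add_mul {u w : ℕ → ℝ} {φ : ℕ → ℕ} {a c C : ℝ}
    (hu0 : ∀ n, 0 ≤ u n) (hw0 : ∀ m, 0 ≤ w m) (hwC : ∀ m, w m ≤ C * m)
    (hφ : Tendsto φ atTop atTop) (hφc : Tendsto (fun n => (φ n : ℝ) / n) atTop (𝓝 c))
    (huw : ∀ n, u n ≤ a * n + w (φ n)) :
    limsup (fun n => u n / n) atTop ≤ a + c * limsup (fun m => w m / m) atTop := by
  set L := limsup (fun m => w m / m) atTop
  have hbdd : IsBoundedUnder (· ≤ ·) atTop fun m => w m / m :=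
    isBoundedUnder_of ⟨C, fun m => div_le_of_le_mul₀ m.cast_nonneg
      ((hw0 1).trans (by simpa using hwC 1)) (hwC m)⟩
  have hcobdd : IsCoboundedUnder (· ≤ ·) atTop fun n => u n / n :=
    isCoboundedUnder_le_of_le atTop fun n => div_nonneg (hu0 n) n.cast_nonneg
  have hbound : ∀ η > 0, limsup (fun n => u n / n) atTop ≤ a + (c + η) * (L + η) := by
    intro η hη
    refine limsup_le_of_le hcobdd ?_
    filter_upwards [hφ.eventually (eventually_lt_of_limsup_lt (lt_add_of_pos_right L hη) hbdd),
      hφc.eventually (gt_mem_nhds (lt_add_of_pos_right c hη)), hφ.eventually_gt_atTop 0,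
      eventually_gt_atTop 0] with n hwφ hφn hφ0 hn
    have hn' : (0 : ℝ) < n := Nat.cast_pos.2 hn
    have hφ0' : (0 : ℝ) < φ n := Nat.cast_pos.2 hφ0
    calc u n / n ≤ a + φ n / n * (w (φ n) / φ n) := by
          rw [div_le_iff₀ hn']
          field_simp
          linarith [huw n]
      _ ≤ a + (c + η) * (L + η) := by
          gcongr
          · exact div_nonneg (hw0 _) hφ0'.le
          · exact (div_nonneg hφ0'.le hn'.le).trans hφn.le
  have hcont : Tendsto (fun η => a + (c + η) * (L + η)) (𝓝[>] 0) (𝓝 (a + c * L)) := by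
    have : Continuous fun η : ℝ => a + (c + η) * (L + η) := by fun_prop
    simpa using (this.tendsto 0).mono_left nhdsWithin_le_nhds
  exact ge_of_tendsto hcont (eventually_nhdsWithin_of_forall hbound)

section Separated

variable {T : X → X} {n : ℕ} {δ : ℝ} {E : Finset X}

lemma IsSeparated.subset {E' : Finset X} (h : IsSeparated T n δ E) (hE' : E' ⊆ E) :
    IsSeparated T n δ E' :=
  fun a ha b hb hab => h a (hE' ha) b (hE' hb) hab

lemma IsSeparated.of_iterate {k : ℕ} (hk : 0 < k) (h : IsSeparated (T^[k]) n δ E) :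
    IsSeparated T (k * n) δ E := by
  intro a ha b hb hab
  obtain ⟨i, hi, hd⟩ := h a ha b hb hab
  exact ⟨k * i, Nat.mul_lt_mul_of_pos_left hi hk, by rwa [iterate_mul]⟩

lemma IsSeparated.iterate_ceilDiv {k : ℕ} (hk : 0 < k) {δ' : ℝ}
    (hδ' : ∀ a b, dist a b < δ' → ∀ r < k, dist (T^[r] a) (T^[r] b) < δ)
    (h : IsSeparated T n δ E) : IsSeparated (T^[k]) (n ⌈/⌉ k) δ' E := by
  intro a ha b hb hab
  obtain ⟨j, hj, hd⟩ := h a ha b hb hab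
  refine ⟨j / k, (Nat.lt_ceilDiv_iff_mul_lt hk).2 ((Nat.mul_div_le j k).trans_lt hj), ?_⟩
  by_contra! hlt
  have := hδ' _ _ hlt (j % k) (Nat.mod_lt _ hk)
  rw [← iterate_mul, ← iterate_add_apply, ← iterate_add_apply, Nat.mod_add_div j k] at this
  exact this.not_ge hd

lemma IsSeparated.injOn {β : Type*} {c : X → β}
    (hc : ∀ x y, c x = c y → ∀ j < n, dist (T^[j] x) (T^[j] y) < δ)
    (h : IsSeparated T n δ E) : InjOn c E := by
  intro a ha b hb hab
  by_contra hne
  obtain ⟨j, hj, hd⟩ := h a ha b hb hne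
  exact (hc a b hab j hj).not_ge hd

end Separated

lemma bowenBall_subset_bowenBall_iterate_ceilDiv {T : X → X} {x : X} {n k : ℕ} {ε : ℝ}
    (hk : 0 < k) : bowenBall T x n ε ⊆ bowenBall (T^[k]) x (n ⌈/⌉ k) ε := fun y hy j hj => by
  simpa only [← iterate_mul] using hy (k * j) ((Nat.lt_ceilDiv_iff_mul_lt hk).1 hj)

lemma exists_forall_dist_iterate_lt [CompactSpace X] {T : X → X} (hT : Continuous T) (k : ℕ)
    {δ : ℝ} (hδ : 0 < δ) :
    ∃ δ' > 0, ∀ a b : X, dist a b < δ' → ∀ r < k, dist (T^[r] a) (T^[r] b) < δ := by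
  have hu : UniformContinuous fun (x : X) (r : Fin k) => T^[r] x :=
    CompactSpace.uniformContinuous_of_continuous (continuous_pi fun r => hT.iterate r)
  obtain ⟨δ', hδ', H⟩ := Metric.uniformContinuous_iff.1 hu δ hδ
  exact ⟨δ', hδ', fun a b hab r hr => (dist_le_pi_dist _ _ ⟨r, hr⟩).trans_lt (H hab)⟩

/-- The code of `x` records, for each `j < n`, a ball of a fixed finite `ε/2`-cover of `X` that
contains `T^[j] x`. -/
lemma exists_orbit_coding [CompactSpace X] (T : X → X) {ε : ℝ} (hε : 0 < ε) :
    ∃ Q : ℕ, 0 < Q ∧ ∀ n, ∃ c : X → Fin n → Fin Q,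
      ∀ x y, c x = c y → ∀ j < n, dist (T^[j] x) (T^[j] y) < ε := by
  obtain ⟨t, -, ht, hcover⟩ :=
    finite_cover_balls_of_compact (isCompact_univ (X := X)) (half_pos hε)
  have := ht.to_subtype
  obtain ⟨Q, ⟨e⟩⟩ := Finite.exists_equiv_fin t
  choose center hmem hball using fun y : X => mem_iUnion₂.1 (hcover (mem_univ y))
  -- `Fin (Q + 1)` rather than `Fin Q`, so that `0 < Q + 1` even when `X` is empty
  refine ⟨Q + 1, Q.succ_pos, fun n => ⟨fun y j => (e ⟨center (T^[j] y), hmem _⟩).castSucc,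
    fun x y hxy j hj => ?_⟩⟩
  have hcenter : center (T^[j] x) = center (T^[j] y) := by
    simpa [Fin.castSucc_inj, e.apply_eq_iff_eq] using congrFun hxy ⟨j, hj⟩
  calc dist (T^[j] x) (T^[j] y)
      ≤ dist (T^[j] x) (center (T^[j] x)) + dist (T^[j] y) (center (T^[j] y)) := by
        rw [hcenter]; exact dist_triangle_right _ _ _
    _ < ε / 2 + ε / 2 := add_lt_add (hball _) (hball _)
    _ = ε := add_halves ε

lemma exists_card_le_pow_of_isSeparated [CompactSpace X] (T : X → X) {δ : ℝ} (hδ : 0 < δ) :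
    ∃ Q : ℕ, 0 < Q ∧ ∀ n (E : Finset X), IsSeparated T n δ E → E.card ≤ Q ^ n := by
  obtain ⟨Q, hQ, hcode⟩ := exists_orbit_coding T hδ
  refine ⟨Q, hQ, fun n E hE => ?_⟩
  obtain ⟨c, hc⟩ := hcode n
  simpa using Finset.card_le_card_of_injOn c (fun _ _ => Finset.mem_univ _) (hE.injOn hc)

section LocalEntropy

variable {T : X → X} {n : ℕ} {δ ε : ℝ} {x : X} {F : Set X} {E : Finset X}

def sepCards (T : X → X) (n : ℕ) (δ : ℝ) (x : X) (F : Set X) (ε : ℝ) : Set ℝ :=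
  {m | ∃ E : Finset X, ↑E ⊆ F ∩ bowenBall T x n ε ∧ IsSeparated T n δ E ∧ m = E.card}

lemma Hloc_eq : Hloc T n δ x F ε = Real.log (sSup (sepCards T n δ x F ε)) := rfl

lemma sSup_sepCards_nonneg : 0 ≤ sSup (sepCards T n δ x F ε) :=
  Real.sSup_nonneg (by rintro _ ⟨E, -, -, rfl⟩; positivity)

lemma Hloc_nonneg : 0 ≤ Hloc T n δ x F ε := by
  rw [Hloc_eq]
  by_cases hpos : ∃ m ∈ sepCards T n δ x F ε, 0 < m
  · by_cases hbdd : BddAbove (sepCards T n δ x F ε)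
    · obtain ⟨m, hm, hm0⟩ := hpos
      have hle := le_csSup hbdd hm
      obtain ⟨E, -, -, rfl⟩ := hm
      exact Real.log_nonneg ((Nat.one_le_cast.2 (Nat.cast_pos.1 hm0)).trans hle)
    · rw [Real.sSup_of_not_bddAbove hbdd, Real.log_zero]
  · push Not at hpos
    rw [le_antisymm (Real.sSup_nonpos hpos) sSup_sepCards_nonneg, Real.log_zero]

lemma Hloc_le_log {M : ℝ} (hM : 1 ≤ M)
    (h : ∀ E : Finset X, ↑E ⊆ F ∩ bowenBall T x n ε → IsSeparated T n δ E → (E.card : ℝ) ≤ M) :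
    Hloc T n δ x F ε ≤ Real.log M := by
  have hSM : sSup (sepCards T n δ x F ε) ≤ M :=
    Real.sSup_le (by rintro _ ⟨E, hE, hsep, rfl⟩; exact h E hE hsep) (zero_le_one.trans hM)
  rw [Hloc_eq]
  rcases (sSup_sepCards_nonneg : 0 ≤ sSup (sepCards T n δ x F ε)).eq_or_lt with h0 | hpos
  · rw [← h0, Real.log_zero]
    exact Real.log_nonneg hM
  · exact Real.log_le_log hpos hSM

lemma HlocF_nonneg : 0 ≤ HlocF T n δ F ε :=
  Real.iSup_nonneg fun _ => Hloc_nonneg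

variable [CompactSpace X]

lemma card_le_exp_Hloc (hδ : 0 < δ) (hE : ↑E ⊆ F ∩ bowenBall T x n ε)
    (hsep : IsSeparated T n δ E) : (E.card : ℝ) ≤ Real.exp (Hloc T n δ x F ε) := by
  rcases E.eq_empty_or_nonempty with rfl | hne
  · simpa using (Real.exp_pos _).le
  obtain ⟨Q, -, hQ⟩ := exists_card_le_pow_of_isSeparated T hδ
  have hle : (E.card : ℝ) ≤ sSup (sepCards T n δ x F ε) :=
    le_csSup ⟨Q ^ n, by rintro _ ⟨E', -, hsep', rfl⟩; exact_mod_cast hQ n E' hsep'⟩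
      ⟨E, hE, hsep, rfl⟩
  rwa [Hloc_eq, Real.exp_log ((Nat.cast_pos.2 hne.card_pos).trans_le hle)]

lemma exists_Hloc_le_mul (T : X → X) (hδ : 0 < δ) :
    ∃ C ≥ 0, ∀ n (x : X) F ε, Hloc T n δ x F ε ≤ C * n := by
  obtain ⟨Q, hQ, hQsep⟩ := exists_card_le_pow_of_isSeparated T hδ
  refine ⟨Real.log Q, Real.log_natCast_nonneg Q, fun n x F ε => ?_⟩
  rw [mul_comm, ← Real.log_pow]
  exact Hloc_le_log (one_le_pow₀ (Nat.one_le_cast.2 hQ))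
    fun E _ hsep => by exact_mod_cast hQsep n E hsep


lemma exists_HlocF_le_mul (T : X → X) (hδ : 0 < δ) :
    ∃ C, ∀ n F ε, HlocF T n δ F ε ≤ C * n := by
  obtain ⟨C, hC, hHloc⟩ := exists_Hloc_le_mul T hδ
  exact ⟨C, fun n F ε => Real.iSup_le (fun x => hHloc n x F ε) (by positivity)⟩

lemma Hloc_le_HlocF (hδ : 0 < δ) (hx : x ∈ F) : Hloc T n δ x F ε ≤ HlocF T n δ F ε := by
  obtain ⟨C, -, hHloc⟩ := exists_Hloc_le_mul T hδ
  exact le_ciSup (f := fun y : F => Hloc T n δ y F ε)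
    ⟨C * n, forall_mem_range.2 fun y => hHloc n y F ε⟩ ⟨x, hx⟩

lemma card_le_exp_HlocF_of_forall_dist_lt (hδ : 0 < δ) (hEF : ↑E ⊆ F)
    (hsep : IsSeparated T n δ E)
    (hclose : ∀ y ∈ E, ∀ z ∈ E, ∀ j < n, dist (T^[j] y) (T^[j] z) < ε) :
    (E.card : ℝ) ≤ Real.exp (HlocF T n δ F ε) := by
  rcases E.eq_empty_or_nonempty with rfl | ⟨e, he⟩
  · simpa using (Real.exp_pos _).le
  have hE : ↑E ⊆ F ∩ bowenBall T e n ε := fun y hy => ⟨hEF hy, hclose e he y hy⟩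
  exact (card_le_exp_Hloc hδ hE hsep).trans (Real.exp_le_exp.2 (Hloc_le_HlocF hδ (hEF he)))

lemma HlocF_le_HlocF_iterate_ceilDiv {k : ℕ} (hk : 0 < k) {δ' : ℝ} (hδ' : 0 < δ')
    (hδδ' : ∀ a b, dist a b < δ' → ∀ r < k, dist (T^[r] a) (T^[r] b) < δ) :
    HlocF T n δ F ε ≤ HlocF (T^[k]) (n ⌈/⌉ k) δ' F ε := by
  refine Real.iSup_le (fun x => le_trans ?_ (Hloc_le_HlocF hδ' x.2)) HlocF_nonneg
  refine (Hloc_le_log (Real.one_le_exp Hloc_nonneg) fun E hE hsep => ?_).trans_eq (Real.log_exp _)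
  refine card_le_exp_Hloc hδ' (fun y hy => ?_) (hsep.iterate_ceilDiv hk hδδ')
  exact ⟨(hE hy).1, bowenBall_subset_bowenBall_iterate_ceilDiv hk (hE hy).2⟩

lemma HlocF_iterate_le {k : ℕ} (hk : 0 < k) (hδ : 0 < δ) {Q : ℕ} (hQ : 0 < Q)
    {c : X → Fin (k * n) → Fin Q}
    (hc : ∀ y z, c y = c z → ∀ j < k * n, dist (T^[j] y) (T^[j] z) < ε) :
    HlocF (T^[k]) n δ F ε ≤ (k * n : ℕ) * Real.log Q + HlocF T (k * n) δ F ε := by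
  classical
  refine Real.iSup_le (fun x => ?_) (add_nonneg (by positivity) HlocF_nonneg)
  rw [← Real.log_pow, ← Real.log_exp (HlocF T (k * n) δ F ε),
    ← Real.log_mul (by positivity) (Real.exp_pos _).ne']
  refine Hloc_le_log (one_le_mul_of_one_le_of_one_le (one_le_pow₀ (Nat.one_le_cast.2 hQ))
    (Real.one_le_exp HlocF_nonneg)) fun E hE hsep => ?_
  have hfiber : ∀ b, ((E.filter (c · = b)).card : ℝ) ≤ Real.exp (HlocF T (k * n) δ F ε) :=
    fun b => card_le_exp_HlocF_of_forall_dist_lt hδ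
      (fun y hy => (hE (Finset.mem_filter.1 hy).1).1)
      ((hsep.of_iterate hk).subset (Finset.filter_subset _ _))
      fun y hy z hz => hc y z ((Finset.mem_filter.1 hy).2.trans (Finset.mem_filter.1 hz).2.symm)
  calc (E.card : ℝ) = ∑ b, ((E.filter (c · = b)).card : ℝ) := by
        exact_mod_cast Finset.card_eq_sum_card_fiberwise fun y _ => Finset.mem_univ (c y)
    _ ≤ (Finset.univ : Finset (Fin (k * n) → Fin Q)).card • Real.exp (HlocF T (k * n) δ F ε) :=
        Finset.sum_le_card_nsmul _ _ _ fun b _ => hfiber b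
    _ = (Q : ℝ) ^ (k * n) * Real.exp (HlocF T (k * n) δ F ε) := by simp

end LocalEntropy

lemma Real.iSup_le_iSup_div {ι ι' : Sort*} [Nonempty ι] {f : ι → ℝ} {g : ι' → ℝ} {c C : ℝ}
    (hc : 0 < c) (hfg : ∀ i, ∃ j, f i ≤ g j / c) (hgf : ∀ j, ∃ i, g j ≤ C + c * f i) :
    ⨆ i, f i ≤ (⨆ j, g j) / c := by
  by_cases hg : BddAbove (range g)
  · refine ciSup_le fun i => ?_
    obtain ⟨j, hj⟩ := hfg i
    exact hj.trans (div_le_div_of_nonneg_right (le_ciSup hg j) hc.le)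
  -- an unbounded real supremum is `0`, so `g` unbounded must force `f` unbounded
  · have hf : ¬BddAbove (range f) := fun ⟨b, hb⟩ => hg ⟨C + c * b, forall_mem_range.2 fun j => by
      obtain ⟨i, hi⟩ := hgf j
      exact hi.trans (by gcongr; exact hb (mem_range_self i))⟩
    rw [Real.iSup_of_not_bddAbove hf, Real.iSup_of_not_bddAbove hg, zero_div]

section Entropy

variable [CompactSpace X] {T : X → X} {k : ℕ} {δ ε : ℝ} {F : Set X}

lemma hδF_nonneg (hδ : 0 < δ) : 0 ≤ hδF T δ F ε := by
  obtain ⟨C, hC⟩ := exists_HlocF_le_mul T hδ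
  refine le_limsup_of_frequently_le
    (Frequently.of_forall fun n => div_nonneg HlocF_nonneg n.cast_nonneg) ?_
  exact isBoundedUnder_of ⟨C, fun n => div_le_of_le_mul₀ n.cast_nonneg
    (HlocF_nonneg.trans (by simpa using hC 1 F ε)) (hC n F ε)⟩

lemma hXF_nonneg : 0 ≤ hXF T F ε :=
  Real.iSup_nonneg fun δ => hδF_nonneg δ.2

lemma exists_hδF_le_hδF_iterate_div (hT : Continuous T) (hk : 0 < k) (hδ : 0 < δ) :
    ∃ δ' > 0, hδF T δ F ε ≤ hδF (T^[k]) δ' F ε / k := by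
  obtain ⟨δ', hδ', hδδ'⟩ := exists_forall_dist_iterate_lt hT k hδ
  obtain ⟨C, hC⟩ := exists_HlocF_le_mul (T^[k]) hδ'
  refine ⟨δ', hδ', ?_⟩
  have := limsup_div_le_add_mul (a := 0) (fun n => HlocF_nonneg) (fun m => HlocF_nonneg)
    (fun m => hC m F ε) (Nat.tendsto_ceilDiv_atTop hk) (Nat.tendsto_ceilDiv_div_atTop hk)
    fun n => by simpa using HlocF_le_HlocF_iterate_ceilDiv (n := n) (F := F) (ε := ε) hk hδ' hδδ'
  simpa [hδF, inv_mul_eq_div] using this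

lemma exists_hδF_iterate_le (T : X → X) (hk : 0 < k) (hε : 0 < ε) :
    ∃ C, ∀ δ > 0, hδF (T^[k]) δ F ε ≤ C + k * hδF T δ F ε := by
  obtain ⟨Q, hQ, hcode⟩ := exists_orbit_coding T hε
  refine ⟨k * Real.log Q, fun δ hδ => ?_⟩
  obtain ⟨C, hC⟩ := exists_HlocF_le_mul T hδ
  have hratio : Tendsto (fun n : ℕ => ((k * n : ℕ) : ℝ) / n) atTop (𝓝 k) :=
    tendsto_const_nhds.congr' <| (eventually_ne_atTop 0).mono fun n hn => by
      field_simp; push_cast; ring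
  refine limsup_div_le_add_mul (fun n => HlocF_nonneg) (fun m => HlocF_nonneg)
    (fun m => hC m F ε) (tendsto_id.const_mul_atTop' hk) hratio fun n => ?_
  obtain ⟨c, hc⟩ := hcode (k * n)
  calc HlocF (T^[k]) n δ F ε ≤ (k * n : ℕ) * Real.log Q + HlocF T (k * n) δ F ε :=
        HlocF_iterate_le hk hδ hQ hc
    _ = k * Real.log Q * n + HlocF T (k * n) δ F ε := by push_cast; ring

lemma hXF_le_hXF_iterate_div (hT : Continuous T) (hk : 0 < k) (hε : 0 < ε) :
    hXF T F ε ≤ hXF (T^[k]) F ε / k := by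
  have : Nonempty {δ : ℝ // 0 < δ} := ⟨⟨1, one_pos⟩⟩
  obtain ⟨C, hC⟩ := exists_hδF_iterate_le (F := F) T hk hε
  refine Real.iSup_le_iSup_div (Nat.cast_pos.2 hk) (fun δ => ?_) fun δ => ⟨δ, hC δ δ.2⟩
  obtain ⟨δ', hδ', h⟩ := exists_hδF_le_hδF_iterate_div (F := F) (ε := ε) hT hk δ.2
  exact ⟨⟨δ', hδ'⟩, h⟩

end Entropy

lemma hNew_le_hNew_div_of_forall_hXF_le [CompactSpace X] [MeasurableSpace X] {T S : X → X}
    {ν : Measure X} [IsProbabilityMeasure ν] {ε c : ℝ} (hc : 0 < c)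
    (h : ∀ F, hXF T F ε ≤ hXF S F ε / c) : hNew T ν ε ≤ hNew S ν ε / c := by
  have : Nonempty {σ : ℝ // σ < 1} := ⟨⟨0, zero_lt_one⟩⟩
  have huniv (σ : {σ : ℝ // σ < 1}) : (σ : ℝ) < (ν univ).toReal := by simpa using σ.2
  have hbdd (R : X → X) (σ : {σ : ℝ // σ < 1}) : BddBelow
      {h | ∃ F, MeasurableSet F ∧ (σ : ℝ) < (ν F).toReal ∧ h = hXF R F ε} :=
    ⟨0, by rintro _ ⟨F, -, -, rfl⟩; exact hXF_nonneg⟩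
  refine ciSup_le fun σ => ?_
  have hσ : sInf {h | ∃ F, MeasurableSet F ∧ (σ : ℝ) < (ν F).toReal ∧ h = hXF S F ε}
      ≤ hNew S ν ε :=
    le_ciSup (f := fun σ : {σ : ℝ // σ < 1} => sInf {h | ∃ F, MeasurableSet F ∧
        (σ : ℝ) < (ν F).toReal ∧ h = hXF S F ε})
      ⟨hXF S univ ε, forall_mem_range.2 fun τ => csInf_le (hbdd S τ) ⟨univ, .univ, huniv τ, rfl⟩⟩ σ
  refine le_trans ?_ (div_le_div_of_nonneg_right hσ hc.le)
  rw [le_div_iff₀ hc]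
  refine le_csInf ⟨_, univ, .univ, huniv σ, rfl⟩ ?_
  rintro _ ⟨F, hF, hνF, rfl⟩
  rw [← le_div_iff₀ hc]
  exact (csInf_le (hbdd T σ) ⟨F, hF, hνF, rfl⟩).trans (h F)

theorem hNew_le_hNew_iterate_div_general [CompactSpace X] [MeasurableSpace X]
    (T : X → X) (hT : Continuous T) (ν : Measure X) [IsProbabilityMeasure ν]
    (k : ℕ) (hk : 0 < k) (ε : ℝ) (hε : 0 < ε) :
    hNew T ν ε ≤ hNew (T^[k]) ν ε / k :=
  hNew_le_hNew_div_of_forall_hXF_le (Nat.cast_pos.2 hk) fun _ => hXF_le_hXF_iterate_div hT hk hε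

theorem hNew_le_hNew_iterate_div [CompactSpace X] [MeasurableSpace X] [BorelSpace X]
    (T : X → X) (hT : Continuous T) (ν : Measure X) [IsProbabilityMeasure ν]
    (hν : Ergodic T ν) (k : ℕ) (hk : 0 < k) (ε : ℝ) (hε : 0 < ε) :
    hNew T ν ε ≤ hNew (T^[k]) ν ε / k :=
  hNew_le_hNew_iterate_div_general T hT ν k hk ε hε
end
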